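/- arXiv:0712.0514 — 5 statements merged into one kernel-verified Lean document; each statement's English description precedes it below -/
import Mathlib

section
/- (Pliss-type selection) Let l ∈ ℕ, 0 < λ < 1 and let (aⱼ)_{j=0}^{m-1} be real numbers with aⱼ ≤ A for all j and (1/m)∑_{j=0}^{m-1} aⱼ ≤ log λ' for some λ' < λ < 1. Then there exists an index 0 ≤ k < m such that for all s with 1 ≤ s ≤ m - k, ∑_{j=k}^{k+s-1} aⱼ ≤ s·log λ. -/
open Finset

/-- Pliss lemma in additive form: if the average of `a₀,…,a_{m-1}` is at most
`log λ' < log λ < 0` and all `aⱼ ≤ A`, then there is `k < m` such that all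
partial sums starting at `k` satisfy `∑_{j=k}^{k+s-1} aⱼ ≤ s · log λ`. -/
theorem pliss_lemma (m : ℕ) (hm : 0 < m) (a : ℕ → ℝ) (A lam lam' : ℝ)
    (hlam'0 : 0 < lam') (hlt : lam' < lam) (hlam1 : lam < 1)
    (hA : ∀ j < m, a j ≤ A)
    (havg : (∑ j ∈ Finset.range m, a j) ≤ (m : ℝ) * Real.log lam') :
    ∃ k < m, ∀ s : ℕ, 1 ≤ s → s ≤ m - k →
      (∑ j ∈ Finset.Ico k (k + s), a j) ≤ (s : ℝ) * Real.log lam := by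
  set S : ℕ → ℝ := fun n => ∑ j ∈ Finset.range n, (a j - Real.log lam) with hS
  obtain ⟨k, hkmem, hkmax⟩ := Finset.exists_max_image (Finset.range (m + 1)) S
    ⟨0, Finset.mem_range.2 (Nat.succ_pos m)⟩
  have hSm : S m < 0 := by
    have hlog : Real.log lam' < Real.log lam := Real.log_lt_log hlam'0 hlt
    have : S m = (∑ j ∈ Finset.range m, a j) - m * Real.log lam := by
      simp [hS, Finset.sum_sub_distrib]
    rw [this]
    have h1 : (∑ j ∈ Finset.range m, a j) ≤ (m : ℝ) * Real.log lam' := havg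
    have h2 : (m : ℝ) * Real.log lam' < (m : ℝ) * Real.log lam :=
      mul_lt_mul_of_pos_left hlog (by exact_mod_cast hm)
    linarith
  have hS0 : S 0 = 0 := by simp [hS]
  have hkm : k < m := by
    rcases Nat.lt_or_ge k m with h | h
    · exact h
    · exfalso
      have hkm' : k = m := Nat.le_antisymm (Nat.lt_succ_iff.1 (Finset.mem_range.1 hkmem)) h
      have := hkmax 0 (Finset.mem_range.2 (Nat.succ_pos m))
      rw [hS0, hkm'] at this
      linarith
  refine ⟨k, hkm, fun s hs1 hs2 => ?_⟩
  have hksm : k + s ≤ m := by omega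
  have hmax := hkmax (k + s) (Finset.mem_range.2 (by omega))
  have hsub : S (k + s) - S k = ∑ j ∈ Finset.Ico k (k + s), (a j - Real.log lam) := by
    rw [hS]
    exact (Finset.sum_Ico_eq_sub _ (Nat.le_add_right k s)).symm
  have : ∑ j ∈ Finset.Ico k (k + s), (a j - Real.log lam) ≤ 0 := by
    rw [← hsub]; linarith
  have hcard : (Finset.Ico k (k + s)).card = s := by simp
  rw [Finset.sum_sub_distrib, Finset.sum_const, hcard, nsmul_eq_mul] at this
  linarith
end

section
/- Let f : X → X be a homeomorphism of a compact metric space, and suppose gₙ → f uniformly with gₙ having periodic points pₙ such that the orbits Orb_{gₙ}(pₙ) converge to Λ in the Hausdorff metric. Then Λ is a compact invariant set for f. -/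
open Metric Filter

private lemma mem_limit_of_orbits {X : Type*} [MetricSpace X] [CompactSpace X]
    (φ : X → X) (hφ : Continuous φ) (ψ : ℕ → X → X)
    (hψ : TendstoUniformly ψ φ atTop)
    (O : ℕ → Set X) (hO : ∀ n, (O n).Nonempty)
    (hinv : ∀ n, ∀ z ∈ O n, ψ n z ∈ O n)
    (Λ : Set X) (hΛne : Λ.Nonempty) (hΛcl : IsClosed Λ)
    (hconv : Tendsto (fun n => hausdorffDist (O n) Λ) atTop (nhds 0))
    {x : X} (hx : x ∈ Λ) : φ x ∈ Λ := by
  rw [← hΛcl.closure_eq]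
  rw [Metric.mem_closure_iff]
  intro ε hε
  obtain ⟨δ, hδ0, hδ⟩ := Metric.uniformContinuous_iff.1 (CompactSpace.uniformContinuous_of_continuous hφ) (ε / 3)
    (by linarith)
  have h1 : ∀ᶠ n in atTop, ∀ z : X, dist (φ z) (ψ n z) < ε / 3 :=
    Metric.tendstoUniformly_iff.1 hψ (ε / 3) (by linarith)
  have h2 : ∀ᶠ n in atTop, hausdorffDist (O n) Λ < min δ (ε / 3) :=
    hconv.eventually (gt_mem_nhds (lt_min hδ0 (by linarith)))
  obtain ⟨n, hn1, hn2⟩ := (h1.and h2).exists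
  have hne : EMetric.hausdorffEdist (O n) Λ ≠ ⊤ :=
    hausdorffEdist_ne_top_of_nonempty_of_bounded (hO n) hΛne
      isBounded_of_compactSpace isBounded_of_compactSpace
  -- find z ∈ O n close to x
  have hxO : infDist x (O n) < δ := by
    calc infDist x (O n) ≤ hausdorffDist Λ (O n) :=
          infDist_le_hausdorffDist_of_mem hx (by rwa [EMetric.hausdorffEdist_comm])
      _ = hausdorffDist (O n) Λ := hausdorffDist_comm
      _ < δ := hn2.trans_le (min_le_left _ _)
  obtain ⟨z, hzO, hz⟩ := (infDist_lt_iff (hO n)).1 hxO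
  -- ψ n z ∈ O n, close to Λ
  have hψz : infDist (ψ n z) Λ < ε / 3 :=
    lt_of_le_of_lt (infDist_le_hausdorffDist_of_mem (hinv n z hzO) hne)
      (hn2.trans_le (min_le_right _ _))
  obtain ⟨y, hyΛ, hy⟩ := (infDist_lt_iff hΛne).1 hψz
  refine ⟨y, hyΛ, ?_⟩
  calc dist (φ x) y ≤ dist (φ x) (φ z) + dist (φ z) (ψ n z) + dist (ψ n z) y :=
        dist_triangle4 _ _ _ _
    _ < ε / 3 + ε / 3 + ε / 3 := by
        exact add_lt_add (add_lt_add (hδ hz) (hn1 z)) hy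
    _ = ε := by ring

/-- If `gₙ → f` uniformly (together with the inverses) and the periodic orbits
`Orb_{gₙ}(pₙ)` converge to `Λ` in the Hausdorff metric, then `Λ` is a compact
`f`-invariant set: a fundamental limit is a compact invariant set. -/
theorem fundamental_limit_compact_invariant {X : Type*} [MetricSpace X] [CompactSpace X]
    (f : X ≃ₜ X) (g : ℕ → X ≃ₜ X)
    (hg : TendstoUniformly (fun n => ⇑(g n)) (⇑f) atTop)
    (hg' : TendstoUniformly (fun n => ⇑(g n).symm) (⇑f.symm) atTop)
    (p : ℕ → X) (π : ℕ → ℕ) (hπ : ∀ n, 1 ≤ π n)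
    (hper : ∀ n, (⇑(g n))^[π n] (p n) = p n)
    (Λ : Set X) (hΛne : Λ.Nonempty) (hΛcl : IsClosed Λ)
    (hconv : Tendsto
      (fun n => hausdorffDist {z | ∃ i < π n, z = (⇑(g n))^[i] (p n)} Λ)
      atTop (nhds 0)) :
    IsCompact Λ ∧ ⇑f '' Λ = Λ := by
  set O : ℕ → Set X := fun n => {z | ∃ i < π n, z = (⇑(g n))^[i] (p n)} with hO_def
  have hO : ∀ n, (O n).Nonempty := fun n => ⟨p n, 0, hπ n, rfl⟩
  have hfwd : ∀ n, ∀ z ∈ O n, (g n) z ∈ O n := by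
    intro n z hz
    obtain ⟨i, hi, rfl⟩ := hz
    rcases eq_or_lt_of_le (Nat.succ_le_of_lt hi) with h | h
    · exact ⟨0, hπ n, by rw [← Function.iterate_succ_apply' (⇑(g n)), h, hper n]; simp⟩
    · exact ⟨i + 1, h, (Function.iterate_succ_apply' (⇑(g n)) i (p n)).symm⟩
  have hbwd : ∀ n, ∀ z ∈ O n, (g n).symm z ∈ O n := by
    intro n z hz
    obtain ⟨i, hi, rfl⟩ := hz
    rcases i with _ | j
    · refine ⟨π n - 1, Nat.sub_lt (hπ n) one_pos, ?_⟩
      have : (⇑(g n))^[π n] (p n) = (g n) ((⇑(g n))^[π n - 1] (p n)) := by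
        conv_lhs => rw [← Nat.succ_pred_eq_of_pos (hπ n)]
        exact Function.iterate_succ_apply' (⇑(g n)) _ (p n)
      rw [Function.iterate_zero, id_eq]
      exact (g n).symm_apply_eq.mpr (by show p n = (g n) _; rw [← this, hper])
    · refine ⟨j, Nat.lt_of_succ_lt hi, ?_⟩
      rw [Function.iterate_succ_apply' (⇑(g n)), Homeomorph.symm_apply_apply]
  have hmem : ∀ x ∈ Λ, f x ∈ Λ := fun x hx =>
    mem_limit_of_orbits (⇑f) f.continuous _ hg O hO hfwd Λ hΛne hΛcl hconv hx
  have hmem' : ∀ x ∈ Λ, f.symm x ∈ Λ := fun x hx =>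
    mem_limit_of_orbits (⇑f.symm) f.symm.continuous _ hg' O hO hbwd Λ hΛne hΛcl hconv hx
  refine ⟨hΛcl.isCompact, Set.Subset.antisymm ?_ ?_⟩
  · rintro _ ⟨x, hx, rfl⟩; exact hmem x hx
  · intro x hx
    exact ⟨f.symm x, hmem' x hx, f.apply_symm_apply x⟩
end

section
/- Let f : X → X be a continuous map of a compact metric space and y ∈ X. Then ω(y), the omega-limit set of y, is a nonempty compact invariant set which is chain transitive: for any two points a, b ∈ ω(y) and any δ > 0 there is a δ-pseudo-orbit from a to b contained in ω(y). -/
open Metric Filter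

/-- The omega-limit set of `y` under `f`. -/
def omegaSet {X : Type*} [MetricSpace X] (f : X → X) (y : X) : Set X :=
  ⋂ N : ℕ, closure {z | ∃ n : ℕ, N ≤ n ∧ z = f^[n] y}

section Aux

variable {X : Type*} [MetricSpace X] [CompactSpace X] (f : X → X) (y : X)

/-- The tail of the orbit from time `N`. -/
def tailSet (N : ℕ) : Set X := {z | ∃ n : ℕ, N ≤ n ∧ z = f^[n] y}

lemma tailSet_anti {N M : ℕ} (h : N ≤ M) : tailSet f y M ⊆ tailSet f y N :=
  fun _ ⟨n, hn, hz⟩ => ⟨n, h.trans hn, hz⟩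

lemma omegaSet_eq : omegaSet f y = ⋂ N : ℕ, closure (tailSet f y N) := rfl

lemma tailSet_nonempty (N : ℕ) : (tailSet f y N).Nonempty :=
  ⟨f^[N] y, N, le_rfl, rfl⟩

lemma mem_omegaSet_iff {a : X} :
    a ∈ omegaSet f y ↔ ∀ N : ℕ, ∀ ε > 0, ∃ n, N ≤ n ∧ dist (f^[n] y) a < ε := by
  rw [omegaSet_eq, Set.mem_iInter]
  constructor
  · intro h N ε hε
    rcases Metric.mem_closure_iff.mp (h N) ε hε with ⟨b, ⟨n, hn, rfl⟩, hb⟩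
    exact ⟨n, hn, by rwa [dist_comm]⟩
  · intro h N
    rw [Metric.mem_closure_iff]
    intro ε hε
    rcases h N ε hε with ⟨n, hn, hd⟩
    exact ⟨f^[n] y, ⟨n, hn, rfl⟩, by rwa [dist_comm]⟩

lemma mem_omegaSet_of_mem_all {a : X}
    (h : ∀ N : ℕ, a ∈ closure (tailSet f y N)) : a ∈ omegaSet f y := by
  rw [omegaSet_eq, Set.mem_iInter]; exact h

lemma omegaSet_isClosed : IsClosed (omegaSet f y) := by
  rw [omegaSet_eq]
  exact isClosed_iInter fun N => isClosed_closure

lemma omegaSet_isCompact : IsCompact (omegaSet f y) :=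
  (omegaSet_isClosed f y).isCompact

lemma omegaSet_nonempty : (omegaSet f y).Nonempty := by
  rw [omegaSet_eq]
  exact IsCompact.nonempty_iInter_of_sequence_nonempty_isCompact_isClosed _
    (fun N => closure_mono (tailSet_anti f y (Nat.le_succ N)))
    (fun N => (tailSet_nonempty f y N).closure)
    isClosed_closure.isCompact (fun N => isClosed_closure)

/-- Every point of `ω(y)` is a limit of a subsequence of the orbit, uniformly:
for every `ε > 0`, eventually the orbit is `ε`-close to `ω(y)`. -/
lemma tail_near_omegaSet {ε : ℝ} (hε : 0 < ε) :
    ∃ N : ℕ, ∀ k, N ≤ k → ∃ z ∈ omegaSet f y, dist (f^[k] y) z < ε := by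
  set U : Set X := {x | ∃ z ∈ omegaSet f y, dist x z < ε} with hU
  have hUopen : IsOpen U := by
    have : U = ⋃ z ∈ omegaSet f y, Metric.ball z ε := by
      ext x
      simp [hU, Metric.mem_ball]
    rw [this]
    exact isOpen_biUnion fun z _ => Metric.isOpen_ball
  have hωU : omegaSet f y ⊆ U := fun z hz => ⟨z, hz, by simpa using hε⟩
  -- consider the sets `closure (tailSet N) \ U`; their intersection is empty
  by_contra hcon
  push_neg at hcon
  have hne : ∀ N : ℕ, (closure (tailSet f y N) ∩ Uᶜ).Nonempty := by
    intro N
    rcases hcon N with ⟨k, hk, hkU⟩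
    refine ⟨f^[k] y, subset_closure ⟨k, hk, rfl⟩, ?_⟩
    intro hmem
    rcases hmem with ⟨z, hz, hd⟩
    exact absurd hd (by simpa using hkU z hz)
  have hclosed : ∀ N : ℕ, IsClosed (closure (tailSet f y N) ∩ Uᶜ) :=
    fun N => isClosed_closure.inter hUopen.isClosed_compl
  have hsub : ∀ N : ℕ, (closure (tailSet f y (N + 1)) ∩ Uᶜ) ⊆
      (closure (tailSet f y N) ∩ Uᶜ) :=
    fun N => Set.inter_subset_inter_left _ (closure_mono (tailSet_anti f y (Nat.le_succ N)))
  have := IsCompact.nonempty_iInter_of_sequence_nonempty_isCompact_isClosed _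
    hsub hne (hclosed 0).isCompact hclosed
  rcases this with ⟨x, hx⟩
  rw [Set.mem_iInter] at hx
  have hxω : x ∈ omegaSet f y :=
    mem_omegaSet_of_mem_all f y fun N => (hx N).1
  exact (hx 0).2 (hωU hxω)

lemma omegaSet_image (hf : Continuous f) : f '' omegaSet f y = omegaSet f y := by
  apply Set.Subset.antisymm
  · -- f '' ω ⊆ ω
    rintro _ ⟨z, hz, rfl⟩
    apply mem_omegaSet_of_mem_all
    intro N
    have h1 : z ∈ closure (tailSet f y N) := by
      rw [omegaSet_eq, Set.mem_iInter] at hz; exact hz N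
    have h2 : f z ∈ closure (f '' tailSet f y N) :=
      (image_closure_subset_closure_image hf) ⟨z, h1, rfl⟩
    refine closure_mono ?_ h2
    rintro _ ⟨w, ⟨n, hn, rfl⟩, rfl⟩
    exact ⟨n + 1, hn.trans (Nat.le_succ n), (Function.iterate_succ_apply' f n y).symm⟩
  · -- ω ⊆ f '' ω : for z ∈ ω find w ∈ ω with f w = z
    intro z hz
    -- the sets `closure (tailSet N) ∩ f⁻¹ {z}` are nonempty nested compact closed
    have hne : ∀ N : ℕ, (closure (tailSet f y N) ∩ f ⁻¹' {z}).Nonempty := by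
      intro N
      -- choose a sequence in tailSet (N+1) converging to z, pull back one step
      have hzN : z ∈ closure (tailSet f y (N + 1)) := by
        rw [omegaSet_eq, Set.mem_iInter] at hz; exact hz (N + 1)
      have hchoice : ∀ k : ℕ, ∃ n : ℕ, N + 1 ≤ n ∧ dist (f^[n] y) z < 1 / (k + 1) := by
        intro k
        rcases Metric.mem_closure_iff.mp hzN (1 / (k + 1)) (by positivity) with
          ⟨b, ⟨n, hn, rfl⟩, hb⟩
        exact ⟨n, hn, by rwa [dist_comm]⟩
      choose u hu1 hu2 using hchoice
      -- the points f^[u k - 1] y lie in the compact set closure (tailSet N)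
      set w : ℕ → X := fun k => f^[u k - 1] y with hw
      have hwmem : ∀ k, w k ∈ closure (tailSet f y N) := by
        intro k
        apply subset_closure
        have := hu1 k
        exact ⟨u k - 1, by omega, rfl⟩
      have hK : IsCompact (closure (tailSet f y N)) := isClosed_closure.isCompact
      rcases hK.isSeqCompact hwmem with ⟨x, hxK, φ, hφ, hconv⟩
      refine ⟨x, hxK, ?_⟩
      -- f (w (φ k)) = f^[u (φ k)] y → z and → f x
      have h1 : Filter.Tendsto (fun k => f (w (φ k))) atTop (nhds (f x)) :=
        (hf.tendsto x).comp hconv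
      have heq : ∀ k, f (w (φ k)) = f^[u (φ k)] y := by
        intro k
        rw [hw]
        simp only
        rw [← Function.iterate_succ_apply' f (u (φ k) - 1) y]
        congr 1
        have := hu1 (φ k)
        omega
      have h2 : Filter.Tendsto (fun k => f (w (φ k))) atTop (nhds z) := by
        rw [tendsto_iff_dist_tendsto_zero]
        apply squeeze_zero (fun k => dist_nonneg)
          (fun k => le_of_lt (by rw [heq k]; exact hu2 (φ k)))
        have : Filter.Tendsto (fun k : ℕ => 1 / ((k : ℝ) + 1)) atTop (nhds 0) :=
          tendsto_one_div_add_atTop_nhds_zero_nat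
        exact this.comp (hφ.tendsto_atTop.comp tendsto_id) |>.congr (fun k => rfl)
      have : f x = z := tendsto_nhds_unique h1 h2
      simpa using this
    have hclosed : ∀ N : ℕ, IsClosed (closure (tailSet f y N) ∩ f ⁻¹' {z}) :=
      fun N => isClosed_closure.inter (isClosed_singleton.preimage hf)
    have hsub : ∀ N : ℕ, (closure (tailSet f y (N + 1)) ∩ f ⁻¹' {z}) ⊆
        (closure (tailSet f y N) ∩ f ⁻¹' {z}) :=
      fun N => Set.inter_subset_inter_left _ (closure_mono (tailSet_anti f y (Nat.le_succ N)))
    have := IsCompact.nonempty_iInter_of_sequence_nonempty_isCompact_isClosed _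
      hsub hne (hclosed 0).isCompact hclosed
    rcases this with ⟨x, hx⟩
    rw [Set.mem_iInter] at hx
    refine ⟨x, mem_omegaSet_of_mem_all f y fun N => (hx N).1, ?_⟩
    have := (hx 0).2
    simpa using this

end Aux

/-- For a continuous map of a compact metric space, `ω(y)` is a nonempty
compact invariant set which is chain transitive: any two of its points are
joined, for every `δ > 0`, by a `δ`-pseudo-orbit contained in `ω(y)`. -/
theorem omega_limit_chain_transitive {X : Type*} [MetricSpace X] [CompactSpace X]
    (f : X → X) (hf : Continuous f) (y : X) :
    (omegaSet f y).Nonempty ∧ IsCompact (omegaSet f y) ∧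
      f '' omegaSet f y = omegaSet f y ∧
      ∀ a ∈ omegaSet f y, ∀ b ∈ omegaSet f y, ∀ δ > 0, ∃ n : ℕ, 1 ≤ n ∧
        ∃ c : ℕ → X, c 0 = a ∧ c n = b ∧ (∀ i ≤ n, c i ∈ omegaSet f y) ∧
          ∀ i < n, dist (f (c i)) (c (i + 1)) < δ := by
  refine ⟨omegaSet_nonempty f y, omegaSet_isCompact f y, omegaSet_image f y hf, ?_⟩
  intro a ha b hb δ hδ
  -- uniform continuity of f
  have hufc : UniformContinuous f := CompactSpace.uniformContinuous_of_continuous hf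
  rcases Metric.uniformContinuous_iff.mp hufc (δ / 2) (by linarith) with ⟨ε₀, hε₀, hε₀'⟩
  set ε : ℝ := min ε₀ (δ / 2) with hεdef
  have hε : 0 < ε := lt_min hε₀ (by linarith)
  have hεuc : ∀ u v : X, dist u v < ε → dist (f u) (f v) < δ / 2 :=
    fun u v h => hε₀' (lt_of_lt_of_le h (min_le_left _ _))
  have hεhalf : ε ≤ δ / 2 := min_le_right _ _
  -- eventually the orbit is ε-close to ω(y)
  rcases tail_near_omegaSet f y hε with ⟨N₀, hN₀⟩
  -- choose approximating points in ω(y)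
  choose g hg1 hg2 using fun k (hk : N₀ ≤ k) => hN₀ k hk
  -- pick n ≥ N₀ with orbit point ε-close to a
  rcases (mem_omegaSet_iff f y).mp ha N₀ ε hε with ⟨n, hn, hna⟩
  -- pick m ≥ n+1 with orbit point δ/2-close to b
  rcases (mem_omegaSet_iff f y).mp hb (n + 1) (δ / 2) (by linarith) with ⟨m, hm, hmb⟩
  set L : ℕ := m - n with hL
  have hL1 : 1 ≤ L := by omega
  have hmL : m = n + L := by omega
  -- build the pseudo-orbit
  classical
  set c : ℕ → X := fun i =>
    if i = 0 then a else if L ≤ i then b else g (n + i) (by omega) with hc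
  refine ⟨L, hL1, c, ?_, ?_, ?_, ?_⟩
  · simp [hc]
  · have : ¬ (L = 0) := by omega
    simp [hc, this]
  · intro i hi
    rcases Nat.eq_zero_or_pos i with rfl | hipos
    · simpa [hc] using ha
    · by_cases hiL : L ≤ i
      · have : ¬ (i = 0) := by omega
        simpa [hc, this, hiL] using hb
      · have hi0 : ¬ (i = 0) := by omega
        simp only [hc, hi0, hiL, if_false, if_neg]
        exact hg1 (n + i) (by omega)
  · intro i hi
    -- dist (c i) (f^[n+i] y) < ε
    have hci : dist (c i) (f^[n + i] y) < ε := by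
      rcases Nat.eq_zero_or_pos i with rfl | hipos
      · simpa [hc, dist_comm] using hna
      · have hi0 : ¬ (i = 0) := by omega
        have hiL : ¬ (L ≤ i) := by omega
        simp only [hc, hi0, hiL, if_false, if_neg]
        have := hg2 (n + i) (by omega)
        rwa [dist_comm]
    -- hence dist (f (c i)) (f^[n+i+1] y) < δ/2
    have h1 : dist (f (c i)) (f^[n + i + 1] y) < δ / 2 := by
      have := hεuc _ _ hci
      rwa [← Function.iterate_succ_apply' f (n + i) y] at this
    -- dist (f^[n+i+1] y) (c (i+1)) < δ/2
    have h2 : dist (f^[n + i + 1] y) (c (i + 1)) < δ / 2 := by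
      by_cases hlast : i + 1 = L
      · have hnz : ¬ (i + 1 = 0) := by omega
        have hle : L ≤ i + 1 := by omega
        have hcL : c (i + 1) = b := by simp [hc, hnz, hle]
        rw [hcL]
        have : n + i + 1 = m := by omega
        rw [this]
        exact hmb
      · have hnz : ¬ (i + 1 = 0) := by omega
        have hiL : ¬ (L ≤ i + 1) := by omega
        simp only [hc, hnz, hiL, if_false, if_neg]
        calc dist (f^[n + i + 1] y) (g (n + (i + 1)) (by omega))
            = dist (f^[n + (i + 1)] y) (g (n + (i + 1)) (by omega)) := by ring_nf
          _ < ε := hg2 (n + (i + 1)) (by omega)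
          _ ≤ δ / 2 := hεhalf
    calc dist (f (c i)) (c (i + 1))
        ≤ dist (f (c i)) (f^[n + i + 1] y) + dist (f^[n + i + 1] y) (c (i + 1)) :=
          dist_triangle _ _ _
      _ < δ / 2 + δ / 2 := add_lt_add h1 h2
      _ = δ := by ring
end

section
/- Let f be a homeomorphism of a compact metric space, Λₙ a sequence of compact invariant sets (e.g., periodic orbits) converging to Λ in the Hausdorff metric. Then Λ is chain transitive for f provided each Λₙ is chain transitive: i.e., the Hausdorff limit of a sequence of chain transitive compact invariant sets is chain transitive. -/
open Metric Filter

/-- `K` is chain transitive for `f`: any two points of `K` are joined by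
`δ`-pseudo-orbits inside `K`, for every `δ > 0`. -/
def ChainTransitiveIn {X : Type*} [MetricSpace X] (f : X → X) (K : Set X) : Prop :=
  ∀ a ∈ K, ∀ b ∈ K, ∀ δ > 0, ∃ n : ℕ, 1 ≤ n ∧ ∃ c : ℕ → X,
    c 0 = a ∧ c n = b ∧ (∀ i ≤ n, c i ∈ K) ∧ ∀ i < n, dist (f (c i)) (c (i + 1)) < δ

/-- The Hausdorff limit of a sequence of chain transitive compact invariant
sets (e.g. periodic orbits) is chain transitive. -/
theorem chainTransitive_of_hausdorff_limit {X : Type*} [MetricSpace X] [CompactSpace X]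
    (f : X ≃ₜ X) (Λseq : ℕ → Set X)
    (hc : ∀ n, IsCompact (Λseq n)) (hne : ∀ n, (Λseq n).Nonempty)
    (hinv : ∀ n, ⇑f '' Λseq n = Λseq n)
    (hct : ∀ n, ChainTransitiveIn (⇑f) (Λseq n))
    (Λ : Set X) (hΛc : IsCompact Λ) (hΛne : Λ.Nonempty)
    (hconv : Tendsto (fun n => hausdorffDist (Λseq n) Λ) atTop (nhds 0)) :
    ChainTransitiveIn (⇑f) Λ := by
  intro a ha b hb δ hδ
  have huc : UniformContinuous f :=
    CompactSpace.uniformContinuous_of_continuous f.continuous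
  obtain ⟨ε0, hε0, hε0'⟩ := Metric.uniformContinuous_iff.1 huc (δ / 3) (by linarith)
  set ε := min ε0 (δ / 6) with hεdef
  have hεpos : 0 < ε := lt_min hε0 (by linarith)
  have hεε0 : ε ≤ ε0 := min_le_left _ _
  have hεδ : ε ≤ δ / 6 := min_le_right _ _
  obtain ⟨N, hN⟩ := (hconv.eventually (gt_mem_nhds hεpos)).exists
  have hedist : EMetric.hausdorffEdist (Λseq N) Λ ≠ ⊤ :=
    Metric.hausdorffEdist_ne_top_of_nonempty_of_bounded (hne N) hΛne (hc N).isBounded hΛc.isBounded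
  -- points of Λseq N near a and b
  obtain ⟨a', ha', haa'⟩ : ∃ a' ∈ Λseq N, dist a a' < ε := by
    refine exists_dist_lt_of_hausdorffDist_lt ha ?_ ?_
    · rwa [hausdorffDist_comm]
    · rwa [EMetric.hausdorffEdist_comm]
  obtain ⟨b', hb', hbb'⟩ : ∃ b' ∈ Λseq N, dist b b' < ε := by
    refine exists_dist_lt_of_hausdorffDist_lt hb ?_ ?_
    · rwa [hausdorffDist_comm]
    · rwa [EMetric.hausdorffEdist_comm]
  -- projection to Λ
  have hpick : ∀ x : X, ∃ y, x ∈ Λseq N → y ∈ Λ ∧ dist x y < ε := by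
    intro x
    by_cases hx : x ∈ Λseq N
    · obtain ⟨y, hy, hd⟩ := exists_dist_lt_of_hausdorffDist_lt hx hN hedist
      exact ⟨y, fun _ => ⟨hy, hd⟩⟩
    · exact ⟨a, fun h => absurd h hx⟩
  classical
  set pick : X → X := fun x => (hpick x).choose with hpickdef
  have hpickspec : ∀ x ∈ Λseq N, pick x ∈ Λ ∧ dist x (pick x) < ε :=
    fun x hx => (hpick x).choose_spec hx
  -- pseudo-orbit in Λseq N
  obtain ⟨m, hm1, c, hc0, hcm, hcmem, hcd⟩ := hct N a' ha' b' hb' (δ / 3) (by linarith)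
  set c' : ℕ → X := fun i => if i = 0 then a else if i = m then b else pick (c i) with hc'def
  have key : ∀ i ≤ m, c' i ∈ Λ ∧ dist (c i) (c' i) < ε := by
    intro i hi
    rcases eq_or_ne i 0 with h0 | h0
    · subst h0
      simp only [hc'def, if_pos rfl]
      rw [hc0, dist_comm]
      exact ⟨ha, haa'⟩
    rcases eq_or_ne i m with hm | hm
    · subst hm
      simp only [hc'def, if_neg h0, if_pos rfl]
      rw [hcm, dist_comm]
      exact ⟨hb, hbb'⟩
    · simp only [hc'def, if_neg h0, if_neg hm]
      exact hpickspec (c i) (hcmem i hi)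
  refine ⟨m, hm1, c', by simp [hc'def], ?_, fun i hi => (key i hi).1, ?_⟩
  · have : m ≠ 0 := by omega
    simp [hc'def, this]
  · intro i hi
    have h1 : dist (c' i) (c i) < ε0 := by
      rw [dist_comm]; exact lt_of_lt_of_le (key i (le_of_lt hi)).2 hεε0
    have h2 : dist (f (c' i)) (f (c i)) < δ / 3 := hε0' h1
    have h3 : dist (f (c i)) (c (i + 1)) < δ / 3 := hcd i hi
    have h4 : dist (c (i + 1)) (c' (i + 1)) < ε := (key (i + 1) hi).2
    calc dist (f (c' i)) (c' (i + 1))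
        ≤ dist (f (c' i)) (f (c i)) + dist (f (c i)) (c (i + 1)) + dist (c (i + 1)) (c' (i + 1)) :=
          dist_triangle4 _ _ _ _
      _ < δ / 3 + δ / 3 + ε := by gcongr
      _ ≤ δ := by linarith
end

section
/- Every homeomorphism f : X → X of a compact metric space has at least one chain recurrent class C that is Lyapunov stable, i.e., admits a basis of neighborhoods Uₙ with closure(Uₙ₊₁) ⊆ Uₙ, ⋂ Uₙ = C, and f(closure(Uₙ)) ⊆ Uₙ. -/
open Metric Filter

/-- A `δ`-pseudo-orbit of length `n ≥ 1` from `x` to `y`. -/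
def Chain {X : Type*} [MetricSpace X] (f : X → X) (δ : ℝ) (x y : X) : Prop :=
  ∃ n : ℕ, 1 ≤ n ∧ ∃ c : ℕ → X, c 0 = x ∧ c n = y ∧ ∀ i < n, dist (f (c i)) (c (i + 1)) < δ

/-- `x ⊣ y` : for every `δ > 0` there is a `δ`-pseudo-orbit from `x` to `y`. -/
def ChainRel {X : Type*} [MetricSpace X] (f : X → X) (x y : X) : Prop :=
  ∀ δ > 0, Chain f δ x y

/-- `x ⊣⊢ y`. -/
def ChainEquivRel {X : Type*} [MetricSpace X] (f : X → X) (x y : X) : Prop :=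
  ChainRel f x y ∧ ChainRel f y x

/-- The chain recurrent set `CR(f)`. -/
def CRset {X : Type*} [MetricSpace X] (f : X → X) : Set X :=
  {x | ChainEquivRel f x x}

section Aux

variable {X : Type*} [MetricSpace X] {f : X → X} {δ δ' ε : ℝ} {x y z : X}

lemma chain_single (h : dist (f x) y < δ) : Chain f δ x y := by
  refine ⟨1, le_refl 1, fun i => if i = 0 then x else y, by simp, by simp, ?_⟩
  intro i hi
  interval_cases i
  simpa using h

lemma chain_mono (hδ : δ ≤ δ') (h : Chain f δ x y) : Chain f δ' x y := by
  obtain ⟨n, hn, c, h0, hn', hs⟩ := h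
  exact ⟨n, hn, c, h0, hn', fun i hi => lt_of_lt_of_le (hs i hi) hδ⟩

lemma chain_trans (h1 : Chain f δ x y) (h2 : Chain f δ y z) : Chain f δ x z := by
  obtain ⟨n, hn, c, hc0, hcn, hc⟩ := h1
  obtain ⟨m, hm, d, hd0, hdm, hd⟩ := h2
  refine ⟨n + m, by omega, fun i => if i < n then c i else d (i - n), ?_, ?_, ?_⟩
  · simp only [if_pos (by omega : 0 < n)]; exact hc0
  · simp only [if_neg (by omega : ¬ n + m < n)]
    rw [(by omega : n + m - n = m)]; exact hdm
  · intro i hi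
    dsimp only
    by_cases h : i < n
    · rw [if_pos h]
      by_cases h' : i + 1 < n
      · rw [if_pos h']; exact hc i h
      · rw [if_neg h']
        have heq : i + 1 = n := by omega
        have : d (i + 1 - n) = c (i + 1) := by
          rw [heq, Nat.sub_self, hd0, hcn]
        rw [this]; exact hc i h
    · rw [if_neg h, if_neg (by omega : ¬ i + 1 < n)]
      rw [(by omega : i + 1 - n = (i - n) + 1)]
      exact hd (i - n) (by omega)

/-- Endpoint replacement. -/
lemma chain_replace (h : Chain f δ x y) :
    ∃ z : X, dist (f z) y < δ ∧
      ∀ (δ' : ℝ) (y' : X), δ ≤ δ' → dist (f z) y' < δ' → Chain f δ' x y' := by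
  obtain ⟨n, hn, c, hc0, hcn, hc⟩ := h
  obtain ⟨m, rfl⟩ : ∃ m, n = m + 1 := ⟨n - 1, by omega⟩
  refine ⟨c m, by rw [← hcn]; exact hc m (by omega), ?_⟩
  intro δ' y' hle hd'
  refine ⟨m + 1, by omega, fun i => if i = m + 1 then y' else c i, ?_, by simp, ?_⟩
  · dsimp only; rw [if_neg (by omega : (0:ℕ) ≠ m + 1)]; exact hc0
  · intro i hi
    dsimp only
    rw [if_neg (by omega : i ≠ m + 1)]
    by_cases h' : i + 1 = m + 1
    · rw [if_pos h']
      have : i = m := by omega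
      subst this; exact hd'
    · rw [if_neg h']
      exact lt_of_lt_of_le (hc i hi) hle

lemma chain_of_close (h : Chain f δ x y) (hd : dist y z < ε) : Chain f (δ + ε) x z := by
  obtain ⟨w, hw, hrep⟩ := chain_replace h
  have hε : 0 ≤ ε := le_trans dist_nonneg hd.le
  refine hrep (δ + ε) z (by linarith) ?_
  calc dist (f w) z ≤ dist (f w) y + dist y z := dist_triangle _ _ _
    _ < δ + ε := by linarith

lemma rel_trans (h1 : ChainRel f x y) (h2 : ChainRel f y z) : ChainRel f x z :=
  fun δ hδ => chain_trans (h1 δ hδ) (h2 δ hδ)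

lemma rel_apply (x : X) : ChainRel f x (f x) :=
  fun δ hδ => chain_single (by simpa using hδ)

lemma isClosed_om (x : X) : IsClosed {y | ChainRel f x y} := by
  rw [← closure_subset_iff_isClosed]
  intro y hy δ hδ
  rcases Metric.mem_closure_iff.mp hy (δ/2) (by positivity) with ⟨z, hz, hdz⟩
  have h2 : Chain f (δ/2 + δ/2) x y :=
    chain_of_close (hz (δ/2) (by positivity)) (by rwa [dist_comm])
  exact chain_mono (by linarith) h2

lemma isOpen_chainset (x : X) (δ : ℝ) : IsOpen {y | Chain f δ x y} := by
  rw [Metric.isOpen_iff]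
  intro y hy
  obtain ⟨z, hz, hrep⟩ := chain_replace hy
  refine ⟨δ - dist (f z) y, by linarith, fun y' hy' => ?_⟩
  have h1 : dist y' y < δ - dist (f z) y := Metric.mem_ball.mp hy'
  refine hrep δ y' le_rfl ?_
  have h2 : dist (f z) y' ≤ dist (f z) y + dist y y' := dist_triangle _ _ _
  rw [dist_comm y y'] at h2
  linarith

lemma closure_step {x : X} {a b : ℝ} (hab : a < b) :
    closure {y | Chain f a x y} ⊆ {y | Chain f b x y} := by
  intro y hy
  rcases Metric.mem_closure_iff.mp hy (b - a) (by linarith) with ⟨z, hz, hdz⟩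
  have h2 : Chain f (a + (b - a)) x y := chain_of_close hz (by rwa [dist_comm] at hdz)
  exact chain_mono (by linarith) h2

end Aux

/-- Conley: every homeomorphism of a (nonempty) compact metric space has at
least one Lyapunov stable chain recurrent class. -/
theorem exists_lyapunov_stable_chain_class {X : Type*} [MetricSpace X] [CompactSpace X]
    [Nonempty X] (f : X ≃ₜ X) :
    ∃ x ∈ CRset (⇑f), ∃ U : ℕ → Set X,
      (∀ n, U n ∈ nhdsSet {y | y ∈ CRset (⇑f) ∧ ChainEquivRel (⇑f) x y}) ∧
      (∀ n, closure (U (n + 1)) ⊆ U n) ∧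
      (⋂ n, U n) = {y | y ∈ CRset (⇑f) ∧ ChainEquivRel (⇑f) x y} ∧
      (∀ n, ⇑f '' closure (U n) ⊆ U n) := by
  set Om : X → Set X := fun p => {y | ChainRel (⇑f) p y} with hOm
  have hOm_closed : ∀ p, IsClosed (Om p) := fun p => isClosed_om p
  have hOm_ne : ∀ p, (Om p).Nonempty := fun p => ⟨f p, rel_apply p⟩
  have hOm_sub : ∀ p q, q ∈ Om p → Om q ⊆ Om p := fun p q hq r hr => rel_trans hq hr
  -- Zorn's lemma: a minimal chain-forward set
  obtain ⟨m, hm⟩ : ∃ m, Minimal (· ∈ Set.range Om) m := by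
    apply zorn_superset
    intro c hcS hchain
    rcases c.eq_empty_or_nonempty with rfl | hcne
    · exact ⟨Om (Classical.arbitrary X), ⟨_, rfl⟩, by simp⟩
    · have hne : Nonempty c := hcne.to_subtype
      have hint : (⋂₀ c).Nonempty := by
        refine IsCompact.nonempty_sInter_of_directed_nonempty_isCompact_isClosed
          (fun a ha b hb => ?_) (fun U hU => ?_) (fun U hU => ?_) (fun U hU => ?_)
        · rcases hchain.total ha hb with h | h
          · exact ⟨a, ha, subset_rfl, h⟩
          · exact ⟨b, hb, h, subset_rfl⟩
        · obtain ⟨p, rfl⟩ := hcS hU; exact hOm_ne p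
        · obtain ⟨p, rfl⟩ := hcS hU; exact (hOm_closed p).isCompact
        · obtain ⟨p, rfl⟩ := hcS hU; exact hOm_closed p
      obtain ⟨p, hp⟩ := hint
      refine ⟨Om p, ⟨p, rfl⟩, ?_⟩
      intro s hs
      obtain ⟨q, rfl⟩ := hcS hs
      exact hOm_sub q p (Set.mem_sInter.mp hp _ hs)
  obtain ⟨⟨x₀, rfl⟩, hmin⟩ := hm
  have key : ∀ q ∈ Om x₀, Om q = Om x₀ := fun q hq =>
    subset_antisymm (hOm_sub _ _ hq) (hmin ⟨q, rfl⟩ (hOm_sub _ _ hq))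
  set x := f x₀ with hxdef
  have hx_mem : x ∈ Om x₀ := rel_apply x₀
  have hOmx : Om x = Om x₀ := key x hx_mem
  have hxx : ChainRel (⇑f) x x := by
    have : x ∈ Om x := by rw [hOmx]; exact hx_mem
    exact this
  have hclass : {y | y ∈ CRset (⇑f) ∧ ChainEquivRel (⇑f) x y} = Om x := by
    ext y
    constructor
    · rintro ⟨-, hxy, -⟩; exact hxy
    · intro hy
      have hy₀ : y ∈ Om x₀ := by rw [← hOmx]; exact hy
      have hOmy : Om y = Om x := by rw [key y hy₀, ← hOmx]
      have hyx : ChainRel (⇑f) y x := by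
        have : x ∈ Om y := by rw [hOmy]; exact hxx
        exact this
      have hyy : ChainRel (⇑f) y y := rel_trans hyx hy
      exact ⟨⟨hyy, hyy⟩, hy, hyx⟩
  have hδpos : ∀ n : ℕ, (0:ℝ) < 1/(n+1) := fun n => by positivity
  set U : ℕ → Set X := fun n => {y | Chain (⇑f) (1/(n+1)) x y} with hU
  have hCsub : ∀ n, Om x ⊆ U n := fun n y hy => hy _ (hδpos n)
  refine ⟨x, ⟨hxx, hxx⟩, U, ?_, ?_, ?_, ?_⟩
  · intro n
    rw [hclass]
    exact (isOpen_chainset x _).mem_nhdsSet.mpr (hCsub n)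
  · intro n
    have hab : (1:ℝ)/(↑(n+1)+1) < 1/(↑n+1) :=
      one_div_lt_one_div_of_lt (by positivity) (by push_cast; linarith)
    exact closure_step hab
  · rw [hclass]
    apply subset_antisymm
    · intro y hy δ hδ
      obtain ⟨n, hn⟩ := exists_nat_one_div_lt hδ
      exact chain_mono hn.le (Set.mem_iInter.mp hy n)
    · exact Set.subset_iInter hCsub
  · intro n
    rintro - ⟨y, hy, rfl⟩
    obtain ⟨ε, hε, hball⟩ := Metric.continuous_iff.mp f.continuous y (1/(n+1)) (hδpos n)
    rcases Metric.mem_closure_iff.mp hy ε hε with ⟨z, hz, hdz⟩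
    exact chain_trans hz (chain_single (hball z (by rwa [dist_comm] at hdz)))
end
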